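/- arXiv:2505.20604 — 5 statements merged into one kernel-verified Lean document; each statement's English description precedes it below -/
import Mathlib

section
/- Suppose Π solves AΠ + BL = ΠS and P solves FP + GL = PS, where spectrum(S) is disjoint from both spectrum(A) and spectrum(F). If CΠ = HP, then for every s* ∈ spectrum(S) that is a simple eigenvalue of S with eigenvector ω (i.e., Sω = s*ω), one has C(s*I − A)^{-1}B · (Lω) = H(s*I − F)^{-1}G · (Lω). -/
open Matrix

lemma map_mul_ofReal {p q t : ℕ} (M : Matrix (Fin p) (Fin q) ℝ) (N : Matrix (Fin q) (Fin t) ℝ) :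
    (M * N).map Complex.ofReal = M.map Complex.ofReal * N.map Complex.ofReal := by
  ext i j
  simp [Matrix.map_apply, Matrix.mul_apply]

lemma map_add_ofReal {p q : ℕ} (M N : Matrix (Fin p) (Fin q) ℝ) :
    (M + N).map Complex.ofReal = M.map Complex.ofReal + N.map Complex.ofReal := by
  ext i j
  simp [Matrix.map_apply]

lemma aux_transfer (m ν : ℕ)
    (A' : Matrix (Fin m) (Fin m) ℂ) (B' : Matrix (Fin m) (Fin 1) ℂ)
    (C' : Matrix (Fin 1) (Fin m) ℂ)
    (S' : Matrix (Fin ν) (Fin ν) ℂ) (L' : Matrix (Fin 1) (Fin ν) ℂ)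
    (Pi' : Matrix (Fin m) (Fin ν) ℂ)
    (hsyl : A' * Pi' + B' * L' = Pi' * S')
    (sstar : ℂ) (ω : Fin ν → ℂ)
    (heig : S'.mulVec ω = sstar • ω)
    (hinv : IsUnit (sstar • (1 : Matrix (Fin m) (Fin m) ℂ) - A')) :
    (C' * (sstar • (1 : Matrix (Fin m) (Fin m) ℂ) - A')⁻¹ * B') 0 0 * (L'.mulVec ω 0)
      = ((C' * Pi').mulVec ω) 0 := by
  set X := sstar • (1 : Matrix (Fin m) (Fin m) ℂ) - A' with hX
  have hdet : IsUnit X.det := (Matrix.isUnit_iff_isUnit_det X).mp hinv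
  have h2 : A'.mulVec (Pi'.mulVec ω) + B'.mulVec (L'.mulVec ω)
      = Pi'.mulVec (S'.mulVec ω) := by
    rw [Matrix.mulVec_mulVec, Matrix.mulVec_mulVec, Matrix.mulVec_mulVec,
      ← Matrix.add_mulVec, hsyl]
  have h1 : X.mulVec (Pi'.mulVec ω) = B'.mulVec (L'.mulVec ω) := by
    rw [heig, Matrix.mulVec_smul] at h2
    rw [hX, Matrix.sub_mulVec, Matrix.smul_mulVec, Matrix.one_mulVec, ← h2]
    abel
  have h3 : Pi'.mulVec ω = X⁻¹.mulVec (B'.mulVec (L'.mulVec ω)) := by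
    rw [← h1, Matrix.mulVec_mulVec, Matrix.nonsing_inv_mul X hdet, Matrix.one_mulVec]
  have h4 : ((C' * X⁻¹ * B').mulVec (L'.mulVec ω)) 0 = ((C' * Pi').mulVec ω) 0 := by
    have : (C' * X⁻¹ * B').mulVec (L'.mulVec ω)
        = C'.mulVec (X⁻¹.mulVec (B'.mulVec (L'.mulVec ω))) := by
      rw [← Matrix.mulVec_mulVec, ← Matrix.mulVec_mulVec]
    rw [this, ← h3, Matrix.mulVec_mulVec]
  rw [← h4]
  simp [Matrix.mulVec, dotProduct, Fin.sum_univ_one]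

/-- If `CPii = HP` for solutions of the two Sylvester equations, then the transfer
functions of the two systems agree (weighted by `Lω`) at every simple eigenvalue
`s*` of `S` with eigenvector `ω`. -/
theorem transfer_functions_agree_at_simple_eigenvalue (n r ν : ℕ)
    (A : Matrix (Fin n) (Fin n) ℝ) (B : Matrix (Fin n) (Fin 1) ℝ)
    (C : Matrix (Fin 1) (Fin n) ℝ)
    (F : Matrix (Fin r) (Fin r) ℝ) (G : Matrix (Fin r) (Fin 1) ℝ)
    (H : Matrix (Fin 1) (Fin r) ℝ)
    (S : Matrix (Fin ν) (Fin ν) ℝ) (L : Matrix (Fin 1) (Fin ν) ℝ)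
    (Pii : Matrix (Fin n) (Fin ν) ℝ) (P : Matrix (Fin r) (Fin ν) ℝ)
    (hPii : A * Pii + B * L = Pii * S)
    (hP : F * P + G * L = P * S)
    (hdisjA : spectrum ℂ (S.map Complex.ofReal) ∩ spectrum ℂ (A.map Complex.ofReal) = ∅)
    (hdisjF : spectrum ℂ (S.map Complex.ofReal) ∩ spectrum ℂ (F.map Complex.ofReal) = ∅)
    (hmatch : C * Pii = H * P)
    (sstar : ℂ) (ω : Fin ν → ℂ) (hω0 : ω ≠ 0)
    (heig : (S.map Complex.ofReal).mulVec ω = sstar • ω)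
    (hsimple : ((S.map Complex.ofReal).charpoly).rootMultiplicity sstar = 1)
    (hinvA : IsUnit (sstar • (1 : Matrix (Fin n) (Fin n) ℂ) - A.map Complex.ofReal))
    (hinvF : IsUnit (sstar • (1 : Matrix (Fin r) (Fin r) ℂ) - F.map Complex.ofReal)) :
    ((C.map Complex.ofReal) * (sstar • (1 : Matrix (Fin n) (Fin n) ℂ) - A.map Complex.ofReal)⁻¹
        * (B.map Complex.ofReal)) 0 0 * ((L.map Complex.ofReal).mulVec ω 0)
      = ((H.map Complex.ofReal) * (sstar • (1 : Matrix (Fin r) (Fin r) ℂ) - F.map Complex.ofReal)⁻¹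
        * (G.map Complex.ofReal)) 0 0 * ((L.map Complex.ofReal).mulVec ω 0) := by
  have mapeq : ∀ (p q : ℕ) (M : Matrix (Fin p) (Fin q) ℝ) (N : Matrix (Fin p) (Fin q) ℝ),
      M = N → M.map Complex.ofReal = N.map Complex.ofReal := by
    intro p q M N h; rw [h]
  have hPii' : (A.map Complex.ofReal) * (Pii.map Complex.ofReal)
      + (B.map Complex.ofReal) * (L.map Complex.ofReal)
      = (Pii.map Complex.ofReal) * (S.map Complex.ofReal) := by
    have := mapeq _ _ _ _ hPii
    simpa [map_add_ofReal, map_mul_ofReal] using this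
  have hP' : (F.map Complex.ofReal) * (P.map Complex.ofReal)
      + (G.map Complex.ofReal) * (L.map Complex.ofReal)
      = (P.map Complex.ofReal) * (S.map Complex.ofReal) := by
    have := mapeq _ _ _ _ hP
    simpa [map_add_ofReal, map_mul_ofReal] using this
  have hmatch' : (C.map Complex.ofReal) * (Pii.map Complex.ofReal)
      = (H.map Complex.ofReal) * (P.map Complex.ofReal) := by
    have := mapeq _ _ _ _ hmatch
    simpa [map_mul_ofReal] using this
  rw [aux_transfer n ν _ _ _ _ _ _ hPii' sstar ω heig hinvA,
    aux_transfer r ν _ _ _ _ _ _ hP' sstar ω heig hinvF, hmatch']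
end

section
/- Suppose all eigenvalues of A ∈ ℝ^{n×n} have negative real part, ω̇ = Sω, ẋ = Ax + BLω, and Π solves AΠ + BL = ΠS. Then x(t) − Πω(t) → 0 as t → ∞, for any initial conditions. -/
open Matrix Filter NormedSpace

attribute [local instance] Matrix.linftyOpNormedRing Matrix.linftyOpNormedAlgebra

lemma aux_scalar {μ : ℂ} (hμ : μ.re < 0) (j : ℕ) :
    Tendsto (fun t : ℝ => Complex.exp (t * μ) * (t : ℂ) ^ j) atTop (nhds 0) := by
  rw [tendsto_zero_iff_norm_tendsto_zero]
  have hc : (0:ℝ) < -μ.re := by linarith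
  have h1 : Tendsto (fun t : ℝ => (-μ.re * t) ^ j * Real.exp (-(-μ.re * t))) atTop (nhds 0) :=
    (Real.tendsto_pow_mul_exp_neg_atTop_nhds_zero j).comp (Tendsto.const_mul_atTop hc tendsto_id)
  have h2 : Tendsto (fun t : ℝ => ((-μ.re) ^ j)⁻¹ * ((-μ.re * t) ^ j * Real.exp (-(-μ.re * t))))
      atTop (nhds 0) := by simpa using h1.const_mul (((-μ.re) ^ j)⁻¹)
  have h3 : Tendsto (fun t : ℝ => t ^ j * Real.exp (μ.re * t)) atTop (nhds 0) := by
    refine h2.congr' ?_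
    filter_upwards [eventually_ge_atTop 0] with t _
    rw [mul_pow, show -(-μ.re * t) = μ.re * t by ring]
    rw [show ((-μ.re) ^ j * t ^ j * Real.exp (μ.re * t)) = (-μ.re) ^ j * (t ^ j * Real.exp (μ.re * t)) by ring,
      inv_mul_cancel_left₀ (pow_ne_zero _ (ne_of_gt hc))]
  refine h3.congr' ?_
  filter_upwards [eventually_ge_atTop 0] with t ht
  rw [norm_mul, norm_pow, Complex.norm_exp]
  simp [Complex.norm_real, abs_of_nonneg ht, mul_comm]

lemma exp_mulVec_tendsto_zero {n : ℕ} (A : Matrix (Fin n) (Fin n) ℂ)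
    (hA : ∀ μ ∈ spectrum ℂ A, μ.re < 0) (v : Fin n → ℂ) :
    Tendsto (fun t : ℝ => (exp (t • A)).mulVec v) atTop (nhds 0) := by
  let p : Submodule ℂ (Fin n → ℂ) :=
    { carrier := {w | Tendsto (fun t : ℝ => (exp (t • A)).mulVec w) atTop (nhds 0)}
      add_mem' := fun {a b} ha hb => by
        simpa [Matrix.mulVec_add] using Tendsto.add ha hb
      zero_mem' := by simpa [Matrix.mulVec_zero] using tendsto_const_nhds
      smul_mem' := fun c w hw => by
        simpa [Matrix.mulVec_smul] using Tendsto.const_smul hw c }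
  set f : Module.End ℂ (Fin n → ℂ) := Matrix.toLinAlgEquiv' A with hf
  have hle : ∀ μ, f.maxGenEigenspace μ ≤ p := by
    intro μ w hw
    rcases (Module.End.mem_maxGenEigenspace f μ w).mp hw with ⟨k, hk⟩
    rcases eq_or_ne w 0 with rfl | hw0
    · exact p.zero_mem
    have hμ : μ.re < 0 := by
      apply hA
      rw [← AlgEquiv.spectrum_eq (Matrix.toLinAlgEquiv' :
          Matrix (Fin n) (Fin n) ℂ ≃ₐ[ℂ] _) A, ← Module.End.hasEigenvalue_iff_mem_spectrum]
      refine Module.End.hasEigenvalue_of_hasGenEigenvalue (k := k) ?_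
      rw [Module.End.hasGenEigenvalue_iff]
      refine Submodule.ne_bot_iff _ |>.mpr ⟨w, ?_, hw0⟩
      rw [Module.End.mem_genEigenspace_nat]
      exact hk
    -- the nilpotent part
    set N : Matrix (Fin n) (Fin n) ℂ := A - μ • 1 with hN
    have hNk : (N ^ k).mulVec w = 0 := by
      have hfN : f - μ • 1 = Matrix.toLinAlgEquiv' N := by
        rw [hf, hN, map_sub, _root_.map_smul, _root_.map_one]
      rw [hfN, ← map_pow] at hk
      rw [← Matrix.toLinAlgEquiv'_apply]
      exact hk
    have key : ∀ t : ℝ, (exp (t • A)).mulVec w =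
        ∑ j ∈ Finset.range k,
          (Complex.exp (t * μ) * ((j.factorial : ℂ))⁻¹ * (t : ℂ) ^ j) • (N ^ j).mulVec w := by
      intro t
      have hsplit : t • A = t • (μ • (1 : Matrix (Fin n) (Fin n) ℂ)) + t • N := by
        rw [hN]; rw [← smul_add]; congr 1; abel
      have hcomm : Commute (t • (μ • (1 : Matrix (Fin n) (Fin n) ℂ))) (t • N) := by
        refine Commute.smul_left (Commute.smul_right ?_ t) t
        exact Commute.smul_left (Commute.one_left N) μ
      have h1 : exp (t • (μ • (1 : Matrix (Fin n) (Fin n) ℂ))) =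
          Complex.exp (t * μ) • (1 : Matrix (Fin n) (Fin n) ℂ) := by
        have h0 : t • (μ • (1 : Matrix (Fin n) (Fin n) ℂ)) =
            algebraMap ℂ (Matrix (Fin n) (Fin n) ℂ) ((t : ℂ) * μ) := by
          rw [Algebra.algebraMap_eq_smul_one, ← smul_assoc, Complex.real_smul]
        rw [h0]
        erw [← map_exp (algebraMap ℂ (Matrix (Fin n) (Fin n) ℂ))
          (continuous_algebraMap _ _)]
        rw [Algebra.algebraMap_eq_smul_one]
        congr 1
        rw [← Complex.exp_eq_exp_ℂ]
      have h2 : (exp (t • N)).mulVec w =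
          ∑ j ∈ Finset.range k, (((j.factorial : ℂ))⁻¹ * (t : ℂ) ^ j) • (N ^ j).mulVec w := by
        rw [exp_eq_tsum ℝ]
        have hs : Summable fun j : ℕ => ((j.factorial : ℝ))⁻¹ • (t • N) ^ j :=
          expSeries_summable' (𝕂 := ℝ) (t • N)
        let T : Matrix (Fin n) (Fin n) ℂ →ₗ[ℂ] (Fin n → ℂ) :=
          { toFun := fun M => M.mulVec w
            map_add' := fun M M' => Matrix.add_mulVec M M' w
            map_smul' := fun c M => Matrix.smul_mulVec c M w }
        have hT : (∑' j : ℕ, ((j.factorial : ℝ))⁻¹ • (t • N) ^ j).mulVec w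
            = ∑' j : ℕ, (((j.factorial : ℝ))⁻¹ • (t • N) ^ j).mulVec w := by
          exact (LinearMap.toContinuousLinearMap T).map_tsum hs
        rw [hT]
        rw [tsum_eq_sum (s := Finset.range k) ?_]
        · refine Finset.sum_congr rfl fun j hj => ?_
          funext i
          simp only [smul_pow, Matrix.smul_mulVec, Pi.smul_apply, Complex.real_smul,
            smul_eq_mul]
          push_cast
          ring
        · intro j hj
          rw [Finset.mem_range, not_lt] at hj
          rw [smul_pow, show N ^ j = N ^ (j - k) * N ^ k by rw [← pow_add]; congr 1; omega]
          rw [Matrix.smul_mulVec, Matrix.smul_mulVec, ← Matrix.mulVec_mulVec, hNk]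
          simp
      rw [hsplit, Matrix.exp_add_of_commute _ _ hcomm, h1, ← Matrix.mulVec_mulVec, h2, Matrix.smul_mulVec,
        Matrix.one_mulVec, Finset.smul_sum]
      refine Finset.sum_congr rfl fun j hj => ?_
      rw [smul_smul]
      ring_nf
    have : Tendsto (fun t : ℝ => ∑ j ∈ Finset.range k,
        (Complex.exp (t * μ) * ((j.factorial : ℂ))⁻¹ * (t : ℂ) ^ j) • (N ^ j).mulVec w)
        atTop (nhds 0) := by
      have h0 : (0 : Fin n → ℂ) = ∑ j ∈ Finset.range k, (0 : Fin n → ℂ) := by simp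
      rw [h0]
      refine tendsto_finset_sum _ fun j hj => ?_
      have := ((aux_scalar hμ j).mul_const ((j.factorial : ℂ))⁻¹).smul_const ((N ^ j).mulVec w)
      simpa [mul_comm, mul_assoc, mul_left_comm] using this
    exact (this.congr (fun t => (key t).symm) : _)
  have htop : p = ⊤ := by
    rw [← top_le_iff] at *
    calc (⊤ : Submodule ℂ (Fin n → ℂ)) = ⨆ μ, f.maxGenEigenspace μ :=
          (Module.End.iSup_maxGenEigenspace_eq_top f).symm
      _ ≤ p := iSup_le hle
  have hv : v ∈ p := htop.symm ▸ Submodule.mem_top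
  exact hv

/-- If `A` is Hurwitz then `x(t) − Piiω(t) → 0` as `t → ∞`. -/
theorem error_tendsto_zero (n ν : ℕ)
    (A : Matrix (Fin n) (Fin n) ℝ) (B : Matrix (Fin n) (Fin 1) ℝ)
    (L : Matrix (Fin 1) (Fin ν) ℝ) (S : Matrix (Fin ν) (Fin ν) ℝ)
    (Pii : Matrix (Fin n) (Fin ν) ℝ)
    (hsyl : A * Pii + B * L = Pii * S)
    (hHurwitz : ∀ μ ∈ spectrum ℂ (A.map Complex.ofReal), μ.re < 0)
    (x : ℝ → Fin n → ℝ) (ω : ℝ → Fin ν → ℝ)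
    (hx : ∀ t, HasDerivAt x (A.mulVec (x t) + B.mulVec (fun _ => L.mulVec (ω t) 0)) t)
    (hω : ∀ t, HasDerivAt ω (S.mulVec (ω t)) t) :
    Tendsto (fun t => x t - Pii.mulVec (ω t)) atTop (nhds 0) := by
  classical
  set e : ℝ → Fin n → ℝ := fun t => x t - Pii.mulVec (ω t) with he
  have hAP : A * Pii = Pii * S - B * L := by rw [← hsyl]; abel
  have he' : ∀ t, HasDerivAt e (A.mulVec (e t)) t := by
    intro t
    have hP : HasDerivAt (fun s => Pii.mulVec (ω s)) (Pii.mulVec (S.mulVec (ω t))) t := by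
      simpa [Function.comp_def] using
        (LinearMap.toContinuousLinearMap
          (Matrix.mulVecLin Pii)).hasFDerivAt.comp_hasDerivAt t (hω t)
    have hBL : B.mulVec (fun _ => L.mulVec (ω t) 0) = (B * L).mulVec (ω t) := by
      rw [← Matrix.mulVec_mulVec]
      congr 1
      funext i; rw [Subsingleton.elim i 0]
    have hx' := (hx t).sub hP
    rw [hBL] at hx'
    convert hx' using 1
    iterate 4 rfl
    rw [Matrix.mulVec_sub, Matrix.mulVec_mulVec, hAP, Matrix.sub_mulVec,
      Matrix.mulVec_mulVec]
    abel
  -- `e t = exp (t • A) *ᵥ e 0`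
  let Φ : Matrix (Fin n) (Fin n) ℝ →L[ℝ] (Fin n → ℝ) →L[ℝ] (Fin n → ℝ) :=
    LinearMap.toContinuousLinearMap
      { toFun := fun M => LinearMap.toContinuousLinearMap M.mulVecLin
        map_add' := fun M M' => by
          ext v i
          simp [Matrix.add_mulVec]
        map_smul' := fun c M => by
          ext v i
          simp [Matrix.smul_mulVec] }
  have hΦ : ∀ M v, Φ M v = M.mulVec v := fun M v => rfl
  have hg : ∀ t, HasDerivAt (fun s : ℝ => Φ (exp (s • (-A))) (e s)) 0 t := by
    intro t
    have hE : HasDerivAt (fun s : ℝ => exp (s • (-A))) (exp (t • (-A)) * (-A)) t :=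
      hasDerivAt_exp_smul_const (-A) t
    have hΦE : HasDerivAt (fun s : ℝ => Φ (exp (s • (-A)))) (Φ (exp (t • (-A)) * (-A))) t :=
      Φ.hasFDerivAt.comp_hasDerivAt t hE
    have := hΦE.clm_apply (he' t)
    convert this using 1
    iterate 3 rfl
    have hcomm : A * exp (t • (-A)) = exp (t • (-A)) * A :=
      (((Commute.refl A).neg_right).smul_right t).exp_right
    simp only [hΦ]
    rw [Matrix.mulVec_mulVec, mul_neg, Matrix.neg_mulVec, neg_add_cancel]
  have hconst : ∀ t : ℝ, Φ (exp (t • (-A))) (e t) = e 0 := by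
    intro t
    have h0 := is_const_of_deriv_eq_zero (f := fun s : ℝ => Φ (exp (s • (-A))) (e s))
      (fun s => (hg s).differentiableAt) (fun s => (hg s).deriv) t 0
    rw [h0]
    simp [hΦ, Matrix.one_mulVec]
  have he_exp : ∀ t : ℝ, e t = (exp (t • A)).mulVec (e 0) := by
    intro t
    have h1 := hconst t
    rw [hΦ] at h1
    have hc : Commute (t • A) (t • (-A)) :=
      (((Commute.refl A).neg_right).smul_right t).smul_left t
    have h2 : exp (t • A) * exp (t • (-A)) = 1 := by
      rw [← Matrix.exp_add_of_commute _ _ hc, show t • A + t • (-A) = 0 by rw [smul_neg, add_neg_cancel],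
        exp_zero]
    conv_lhs => rw [← Matrix.one_mulVec (e t), ← h2, ← Matrix.mulVec_mulVec, h1]
  -- complexification
  let A' : Matrix (Fin n) (Fin n) ℂ := A.map Complex.ofReal
  have hmapC : Continuous (⇑(Complex.ofRealHom.mapMatrix :
      Matrix (Fin n) (Fin n) ℝ →+* Matrix (Fin n) (Fin n) ℂ)) := by
    let lm : Matrix (Fin n) (Fin n) ℝ →ₗ[ℝ] Matrix (Fin n) (Fin n) ℂ :=
      { toFun := fun M => M.map Complex.ofReal
        map_add' := fun M M' => by ext i j; simp [Matrix.map_apply]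
        map_smul' := fun c M => by
          ext i j
          simp [Matrix.map_apply, Complex.real_smul] }
    exact lm.continuous_of_finiteDimensional
  have hexpC : ∀ t : ℝ, (exp (t • A)).map Complex.ofReal = exp (t • A') := by
    intro t
    have h1 := map_exp (Complex.ofRealHom.mapMatrix :
      Matrix (Fin n) (Fin n) ℝ →+* Matrix (Fin n) (Fin n) ℂ) hmapC (t • A)
    have h2 : (Complex.ofRealHom.mapMatrix :
        Matrix (Fin n) (Fin n) ℝ →+* Matrix (Fin n) (Fin n) ℂ) (t • A) = t • A' := by
      ext i j
      simp [RingHom.mapMatrix_apply, Matrix.map_apply, Complex.real_smul, A']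
    rw [← h2]
    exact h1
  have hmv : ∀ (M : Matrix (Fin n) (Fin n) ℝ) (v : Fin n → ℝ),
      (M.map Complex.ofReal).mulVec (fun i => ((v i : ℝ) : ℂ))
        = fun i => ((M.mulVec v i : ℝ) : ℂ) := by
    intro M v
    funext i
    simp [Matrix.mulVec, dotProduct, Matrix.map_apply]
  have hC : Tendsto (fun t : ℝ => fun i => ((e t i : ℝ) : ℂ)) atTop (nhds 0) := by
    have hc := exp_mulVec_tendsto_zero A' hHurwitz (fun i => ((e 0 i : ℝ) : ℂ))
    refine hc.congr fun t => ?_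
    rw [← hexpC t, hmv, ← he_exp t]
  rw [tendsto_pi_nhds]
  intro i
  have hci : Tendsto (fun t : ℝ => ((e t i : ℝ) : ℂ)) atTop (nhds 0) := by
    have := tendsto_pi_nhds.mp hC i
    simpa using this
  have := (Complex.continuous_re.tendsto 0).comp hci
  simpa [Function.comp_def] using this
end

section
/- Let A ∈ ℝ^{n×n}, B ∈ ℝ^{n×1}, s* ∉ spectrum(A), and suppose Q ∈ ℝ^{n×r}, P ∈ ℝ^{r×n} with PQ = I and (s*I − A)^{-1}B ∈ Image(Q). Set F = PAQ, G = PB, H = CQ for any C ∈ ℝ^{1×n}. If s*I − F is invertible, then C(s*I − A)^{-1}B = H(s*I − F)^{-1}G, i.e., the reduced model matches the 0-th moment at s*. -/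
open Matrix

lemma entry_eq_mulVec {m n : ℕ} (X : Matrix (Fin m) (Fin n) ℝ)
    (B : Matrix (Fin n) (Fin 1) ℝ) (i : Fin m) :
    (X * B) i 0 = X.mulVec (fun j => B j 0) i := by
  simp [Matrix.mul_apply, Matrix.mulVec, dotProduct]

/-- Krylov projection matches the 0-th moment at `s*`:
if `(s*I−A)⁻¹B ∈ Image(Q)` and `PQ = I`, then
`C(s*I−A)⁻¹B = H(s*I−F)⁻¹G` with `F = PAQ`, `G = PB`, `H = CQ`. -/
theorem krylov_projection_zeroth_moment (n r : ℕ)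
    (A : Matrix (Fin n) (Fin n) ℝ) (B : Matrix (Fin n) (Fin 1) ℝ)
    (C : Matrix (Fin 1) (Fin n) ℝ) (sstar : ℝ)
    (hA : sstar ∉ spectrum ℝ A)
    (Q : Matrix (Fin n) (Fin r) ℝ) (P : Matrix (Fin r) (Fin n) ℝ)
    (hPQ : P * Q = 1)
    (hB : ∃ z : Fin r → ℝ,
      Q.mulVec z = ((sstar • (1 : Matrix (Fin n) (Fin n) ℝ) - A)⁻¹).mulVec (fun i => B i 0))
    (hF : IsUnit (sstar • (1 : Matrix (Fin r) (Fin r) ℝ) - P * A * Q)) :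
    (C * (sstar • (1 : Matrix (Fin n) (Fin n) ℝ) - A)⁻¹ * B) 0 0
      = ((C * Q) * (sstar • (1 : Matrix (Fin r) (Fin r) ℝ) - P * A * Q)⁻¹ * (P * B)) 0 0 := by
  set M : Matrix (Fin n) (Fin n) ℝ := sstar • 1 - A with hM
  set Fm : Matrix (Fin r) (Fin r) ℝ := sstar • 1 - P * A * Q with hFm
  obtain ⟨z, hz⟩ := hB
  set b : Fin n → ℝ := fun i => B i 0 with hb
  -- M is a unit
  have hMunit : IsUnit M := by
    have := spectrum.notMem_iff.mp hA
    simpa [hM, Algebra.algebraMap_eq_smul_one] using this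
  have hMdet : IsUnit M.det := (Matrix.isUnit_iff_isUnit_det M).mp hMunit
  have hFdet : IsUnit Fm.det := (Matrix.isUnit_iff_isUnit_det Fm).mp hF
  -- P * M * Q = Fm
  have hPMQ : P * M * Q = Fm := by
    simp [hM, hFm, Matrix.mul_sub, Matrix.sub_mul, Matrix.mul_smul, Matrix.smul_mul,
      Matrix.mul_assoc, hPQ]
  -- Fm ⬝ z = P ⬝ b
  have key : Fm.mulVec z = P.mulVec b := by
    rw [← hPMQ]
    calc (P * M * Q).mulVec z = (P * M).mulVec (Q.mulVec z) := by
          rw [Matrix.mulVec_mulVec]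
      _ = (P * M).mulVec (M⁻¹.mulVec b) := by rw [hz]
      _ = (P * M * M⁻¹).mulVec b := by rw [Matrix.mulVec_mulVec]
      _ = P.mulVec b := by
          rw [Matrix.mul_assoc, Matrix.mul_nonsing_inv M hMdet, Matrix.mul_one]
  -- z = Fm⁻¹ ⬝ P ⬝ b
  have hzval : z = Fm⁻¹.mulVec (P.mulVec b) := by
    rw [← key, Matrix.mulVec_mulVec, Matrix.nonsing_inv_mul Fm hFdet, Matrix.one_mulVec]
  have hPB : (fun j => (P * B) j 0) = P.mulVec b := by
    funext j; exact entry_eq_mulVec P B j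
  calc (C * M⁻¹ * B) 0 0 = (C * M⁻¹).mulVec b 0 := entry_eq_mulVec _ B 0
    _ = C.mulVec (M⁻¹.mulVec b) 0 := by rw [← Matrix.mulVec_mulVec]
    _ = C.mulVec (Q.mulVec z) 0 := by rw [hz]
    _ = (C * Q).mulVec z 0 := by rw [Matrix.mulVec_mulVec]
    _ = ((C * Q) * Fm⁻¹).mulVec (P.mulVec b) 0 := by
        rw [hzval, Matrix.mulVec_mulVec]
    _ = ((C * Q) * Fm⁻¹ * (P * B)) 0 0 := by
        rw [entry_eq_mulVec _ (P * B) 0, hPB]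
end

section
/- Under the setup of Krylov projection with K_k(A, B; s*) ⊆ Image(Q), PQ = I, F = PAQ, G = PB, H = CQ, and s*I − A, s*I − F invertible: for all j with 1 ≤ j ≤ k, C(s*I − A)^{-j}B = H(s*I − F)^{-j}G. -/
open Matrix

private lemma entry_mulVec {n : ℕ} (Y : Matrix (Fin 1) (Fin n) ℝ)
    (Bm : Matrix (Fin n) (Fin 1) ℝ) :
    (Y * Bm) 0 0 = Y.mulVec (fun i => Bm i 0) 0 := by
  simp [Matrix.mul_apply, Matrix.mulVec, dotProduct]

/-- Krylov projection matches moments of orders `0` through `k−1` at `s*`: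
`C(s*I−A)^{-j}B = H(s*I−F)^{-j}G` for `1 ≤ j ≤ k`. -/
theorem krylov_projection_moment_matching (n r k : ℕ)
    (A : Matrix (Fin n) (Fin n) ℝ) (B : Matrix (Fin n) (Fin 1) ℝ)
    (C : Matrix (Fin 1) (Fin n) ℝ) (sstar : ℝ)
    (hA : IsUnit (sstar • (1 : Matrix (Fin n) (Fin n) ℝ) - A))
    (Q : Matrix (Fin n) (Fin r) ℝ) (P : Matrix (Fin r) (Fin n) ℝ)
    (hPQ : P * Q = 1)
    (hKrylov : ∀ i : Fin k, ∃ z : Fin r → ℝ,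
      Q.mulVec z = (((sstar • (1 : Matrix (Fin n) (Fin n) ℝ) - A)⁻¹) ^ ((i : ℕ) + 1)).mulVec
        (fun i => B i 0))
    (hF : IsUnit (sstar • (1 : Matrix (Fin r) (Fin r) ℝ) - P * A * Q)) :
    ∀ j : ℕ, 1 ≤ j → j ≤ k →
      (C * ((sstar • (1 : Matrix (Fin n) (Fin n) ℝ) - A)⁻¹) ^ j * B) 0 0
        = ((C * Q) * ((sstar • (1 : Matrix (Fin r) (Fin r) ℝ) - P * A * Q)⁻¹) ^ j
            * (P * B)) 0 0 := by
  intro j hj1 hjk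
  set M := sstar • (1 : Matrix (Fin n) (Fin n) ℝ) - A with hM
  set N := sstar • (1 : Matrix (Fin r) (Fin r) ℝ) - P * A * Q with hN
  have hMdet : IsUnit M.det := (Matrix.isUnit_iff_isUnit_det M).mp hA
  have hNdet : IsUnit N.det := (Matrix.isUnit_iff_isUnit_det N).mp hF
  have hMM : M * M⁻¹ = 1 := Matrix.mul_nonsing_inv M hMdet
  have hNN : N⁻¹ * N = 1 := Matrix.nonsing_inv_mul N hNdet
  set b : Fin n → ℝ := fun i => B i 0 with hb
  have hPMQ : P * M * Q = N := by
    simp [hM, hN, Matrix.sub_mul, Matrix.mul_sub, Matrix.smul_mul, Matrix.mul_smul,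
      hPQ, mul_assoc]
  have hNPQ : N * P * Q = P * M * Q := by
    rw [hPMQ, Matrix.mul_assoc, hPQ, Matrix.mul_one]
  -- key claim: P (s*I-A)^{-m} B = (s*I-F)^{-m} P B for m ≤ k
  have key : ∀ m : ℕ, m ≤ k →
      P.mulVec ((M⁻¹ ^ m).mulVec b) = (N⁻¹ ^ m).mulVec (P.mulVec b) := by
    intro m
    induction m with
    | zero => intro _; simp
    | succ m ih =>
      intro hm
      obtain ⟨z, hz⟩ := hKrylov ⟨m, by omega⟩
      have hz' : Q.mulVec z = (M⁻¹ ^ (m + 1)).mulVec b := hz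
      have hpow : M * M⁻¹ ^ (m + 1) = M⁻¹ ^ m := by
        rw [pow_succ', ← mul_assoc, hMM, one_mul]
      have step : N.mulVec (P.mulVec ((M⁻¹ ^ (m + 1)).mulVec b))
          = (N⁻¹ ^ m).mulVec (P.mulVec b) := by
        rw [← hz']
        calc N.mulVec (P.mulVec (Q.mulVec z))
            = (N * P * Q).mulVec z := by
              rw [Matrix.mulVec_mulVec, Matrix.mulVec_mulVec, Matrix.mul_assoc]
          _ = (P * M * Q).mulVec z := by rw [hNPQ]
          _ = P.mulVec (M.mulVec (Q.mulVec z)) := by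
              simp [Matrix.mul_assoc]
          _ = P.mulVec ((M * M⁻¹ ^ (m + 1)).mulVec b) := by
              rw [hz']; simp [Matrix.mul_assoc]
          _ = P.mulVec ((M⁻¹ ^ m).mulVec b) := by rw [hpow]
          _ = (N⁻¹ ^ m).mulVec (P.mulVec b) := ih (by omega)
      calc P.mulVec ((M⁻¹ ^ (m + 1)).mulVec b)
          = (N⁻¹ * N).mulVec (P.mulVec ((M⁻¹ ^ (m + 1)).mulVec b)) := by
            rw [hNN, Matrix.one_mulVec]
        _ = N⁻¹.mulVec (N.mulVec (P.mulVec ((M⁻¹ ^ (m + 1)).mulVec b))) := by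
            simp [Matrix.mul_assoc]
        _ = N⁻¹.mulVec ((N⁻¹ ^ m).mulVec (P.mulVec b)) := by rw [step]
        _ = (N⁻¹ ^ (m + 1)).mulVec (P.mulVec b) := by
            rw [Matrix.mulVec_mulVec, ← pow_succ']
  obtain ⟨z, hz⟩ := hKrylov ⟨j - 1, by omega⟩
  have hz' : Q.mulVec z = (M⁻¹ ^ j).mulVec b := by
    have : (j - 1) + 1 = j := by omega
    simpa [this] using hz
  have hPBvec : (fun i => (P * B) i 0) = P.mulVec b := by
    funext i
    simp [Matrix.mul_apply, Matrix.mulVec, dotProduct, hb]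
  rw [entry_mulVec, entry_mulVec, hPBvec, ← hb]
  calc (C * M⁻¹ ^ j).mulVec b 0
      = C.mulVec ((M⁻¹ ^ j).mulVec b) 0 := by rw [Matrix.mulVec_mulVec]
    _ = C.mulVec (Q.mulVec z) 0 := by rw [hz']
    _ = (C * Q).mulVec (P.mulVec (Q.mulVec z)) 0 := by
        simp [Matrix.mul_assoc, hPQ]
    _ = (C * Q).mulVec (P.mulVec ((M⁻¹ ^ j).mulVec b)) 0 := by rw [hz']
    _ = (C * Q).mulVec ((N⁻¹ ^ j).mulVec (P.mulVec b)) 0 := by rw [key j hjk]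
    _ = ((C * Q) * N⁻¹ ^ j).mulVec (P.mulVec b) 0 := by rw [Matrix.mulVec_mulVec]
end

section
/- Under the hypotheses of the previous intertwining result (PQ = I, (S − ΔL)Ker(P) ⊆ Ker(P), Ker(P) ⊆ Ker(CΠ)), the matrix P solves the reduced Sylvester equation F P + G L = P S, where F = P(S − ΔL)Q, G = PΔ. Consequently the reduced model satisfies the exact matching condition HP = CΠ required for moment matching at (S, L). -/
open Matrix

lemma ker_factor {r m ν : ℕ} (P : Matrix (Fin r) (Fin ν) ℝ)
    (Q : Matrix (Fin ν) (Fin r) ℝ) (hPQ : P * Q = 1)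
    (M : Matrix (Fin m) (Fin ν) ℝ)
    (h : ∀ v : Fin ν → ℝ, P.mulVec v = 0 → M.mulVec v = 0) :
    M * Q * P = M := by
  ext i j
  have hv : P.mulVec (Q.mulVec (P.mulVec (Pi.single j 1)) - Pi.single j 1) = 0 := by
    rw [Matrix.mulVec_sub, Matrix.mulVec_mulVec, Matrix.mulVec_mulVec, hPQ,
      Matrix.one_mul, sub_self]
  have hm := h _ hv
  rw [Matrix.mulVec_sub, sub_eq_zero] at hm
  have := congrFun hm i
  simp only [Matrix.mulVec_mulVec, Matrix.mulVec_single, mul_one] at this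
  simpa [Matrix.mul_apply, Matrix.mulVec, dotProduct] using this

/-- Under the intertwining hypotheses, `P` solves the reduced Sylvester
equation `FP + GL = PS` with `F = P(S−ΔL)Q`, `G = PΔ`, and the exact matching
condition `HP = CPii` holds with `H = CPiiQ`. -/
theorem reduced_sylvester_and_matching (n r ν : ℕ)
    (A : Matrix (Fin n) (Fin n) ℝ) (B : Matrix (Fin n) (Fin 1) ℝ)
    (C : Matrix (Fin 1) (Fin n) ℝ)
    (S : Matrix (Fin ν) (Fin ν) ℝ) (L : Matrix (Fin 1) (Fin ν) ℝ)
    (Δ : Matrix (Fin ν) (Fin 1) ℝ)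
    (Pii : Matrix (Fin n) (Fin ν) ℝ) (hPii : A * Pii + B * L = Pii * S)
    (P : Matrix (Fin r) (Fin ν) ℝ) (Q : Matrix (Fin ν) (Fin r) ℝ)
    (hPQ : P * Q = 1)
    (hinv : ∀ v : Fin ν → ℝ, P.mulVec v = 0 → P.mulVec ((S - Δ * L).mulVec v) = 0)
    (hker : ∀ v : Fin ν → ℝ, P.mulVec v = 0 → (C * Pii).mulVec v = 0) :
    (P * (S - Δ * L) * Q) * P + (P * Δ) * L = P * S
    ∧ (C * Pii * Q) * P = C * Pii := by
  constructor
  · have h1 : P * (S - Δ * L) * Q * P = P * (S - Δ * L) := by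
      apply ker_factor P Q hPQ
      intro v hv
      rw [← Matrix.mulVec_mulVec]
      exact hinv v hv
    rw [h1, Matrix.mul_sub, Matrix.mul_assoc, sub_add_cancel]
  · exact ker_factor P Q hPQ (C * Pii) hker
end
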